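/- arXiv:1807.01021 — 2 statements merged into one kernel-verified Lean document; each statement's English description precedes it below -/
import Mathlib

section
/- If G is a graph containing a cycle, with girth g(G), maximum degree Δ(G) ≥ k, and k ≥ 3, then L_k(G) ≥ g(G) + k − 3. -/
/-!
Let `C` be a shortest cycle, of length `g`. Two distinct paths between the same vertices contain
a cycle, so their lengths add up to at least `g`. Applied to a chord `vu` at a vertex `v` of `C`
and the two arcs of `C` from `v` to `u`, this shows that the only neighbours of `v` on `C` are its
two cycle neighbours. Applied to a path `x v u` through a vertex `v` off `C` and the two arcs from
`x` to `u`, it shows that `u` lies at distance `2` or `g - 2` from `x` along `C`. Hence `V(C)` is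
a `3`-limited packing of size `g`. Raising the bound from `j` to `j + 1` allows one more vertex to
be added to a `j`-limited packing, and some vertex is still missing as long as `j ≤ Δ`, since the
closed neighbourhood of a vertex of maximum degree has `Δ + 1` vertices.
-/

open Finset

/-- `B` is a `k`-limited packing in `G`: every closed neighbourhood contains
at most `k` vertices of `B`. -/
def limPack {V : Type*} [Fintype V] [DecidableEq V] (G : SimpleGraph V)
    [DecidableRel G.Adj] (k : ℕ) (B : Finset V) : Prop :=
  ∀ v : V, (insert v (G.neighborFinset v) ∩ B).card ≤ k

/-- The `k`-limited packing number `L_k(G)`. -/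
noncomputable def limPackNum {V : Type*} [Fintype V] [DecidableEq V] (G : SimpleGraph V)
    [DecidableRel G.Adj] (k : ℕ) : ℕ :=
  sSup {n | ∃ B : Finset V, limPack G k B ∧ B.card = n}

namespace SimpleGraph

variable {V : Type*} {G : SimpleGraph V}

theorem girth_le_length_add_length_of_ne {u v : V} {p q : G.Walk u v} (hp : p.IsPath)
    (hq : q.IsPath) (hpq : p ≠ q) : G.girth ≤ p.length + q.length := by
  obtain ⟨w, -, -, c, hc, hlen⟩ := hp.exists_isCycle_length_le_add_of_ne hq hpq
  exact (girth_le_length hc).trans hlen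

namespace Walk

variable {x : V} {c : G.Walk x x}

theorem IsCycle.card_support_toFinset [DecidableEq V] (hc : c.IsCycle) :
    c.support.toFinset.card = c.length := by
  have hx : x ∈ c.support.tail := end_mem_tail_support hc.not_nil
  rw [← c.cons_tail_support, List.toFinset_cons, insert_eq_of_mem (List.mem_toFinset.2 hx),
    List.toFinset_card_of_nodup hc.support_nodup, List.length_tail, length_support]
  rfl

theorem IsCycle.length_le_of_isPath (hc : c.IsCycle) (hg : G.girth = c.length) {n : ℕ}
    (hn : n < c.length) (hn₀ : 0 < n) {q : G.Walk x (c.getVert n)} (hq : q.IsPath)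
    (htake : q ≠ c.take n) (hdrop : q ≠ (c.drop n).reverse) :
    c.length - q.length ≤ n ∧ n ≤ q.length := by
  have h₁ := girth_le_length_add_length_of_ne hq (hc.isPath_take hn) htake
  have h₂ := girth_le_length_add_length_of_ne hq (hc.isPath_drop hn₀).reverse hdrop
  rw [take_length] at h₁
  rw [length_reverse, drop_length] at h₂
  omega

theorem IsCycle.eq_getVert_of_adj (hc : c.IsCycle) (hg : G.girth = c.length) {u : V}
    (hu : u ∈ c.support) (hxu : G.Adj x u) :
    u = c.getVert 1 ∨ u = c.getVert (c.length - 1) := by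
  obtain ⟨n, rfl, hn⟩ := mem_support_iff_exists_getVert.1 hu
  have hn₀ : n ≠ 0 := by rintro rfl; exact hxu.ne (getVert_zero c).symm
  have hn' : n ≠ c.length := by rintro rfl; exact hxu.ne (getVert_length c).symm
  have h3 := hc.three_le_length
  by_cases htake : hxu.toWalk = c.take n
  · have h := congrArg length htake
    simp only [Adj.length_toWalk, take_length] at h
    left; congr; omega
  by_cases hdrop : hxu.toWalk = (c.drop n).reverse
  · have h := congrArg length hdrop
    simp only [Adj.length_toWalk, length_reverse, drop_length] at h
    right; congr; omega
  have := hc.length_le_of_isPath hg (by omega) (by omega) hxu.isPath_toWalk htake hdrop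
  simp only [Adj.length_toWalk] at this
  omega

theorem IsCycle.eq_getVert_of_adj_of_adj (hc : c.IsCycle) (hg : G.girth = c.length) {v u : V}
    (hv : v ∉ c.support) (hxv : G.Adj x v) (hvu : G.Adj v u) (hu : u ∈ c.support)
    (hux : u ≠ x) : u = c.getVert 2 ∨ u = c.getVert (c.length - 2) := by
  obtain ⟨n, rfl, hn⟩ := mem_support_iff_exists_getVert.1 hu
  have hn₀ : n ≠ 0 := by rintro rfl; exact hux (getVert_zero c)
  have hn' : n ≠ c.length := by rintro rfl; exact hux (getVert_length c)
  have h3 := hc.three_le_length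
  let q : G.Walk x (c.getVert n) := cons hxv hvu.toWalk
  have hq : q.IsPath := by
    refine (cons_isPath_iff _ _).2 ⟨hvu.isPath_toWalk, ?_⟩
    simp only [Adj.support_toWalk, List.mem_cons, List.not_mem_nil, or_false, not_or]
    exact ⟨fun h => hv (h ▸ c.start_mem_support), Ne.symm hux⟩
  have hvq : v ∈ q.support := by simp [q]
  have htake : q ≠ c.take n := fun h =>
    hv ((isSubwalk_take c n).support_subset (h ▸ hvq))
  have hdrop : q ≠ (c.drop n).reverse := by
    intro h
    rw [h, support_reverse, List.mem_reverse] at hvq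
    exact hv ((isSubwalk_drop c n).support_subset hvq)
  have := hc.length_le_of_isPath hg (by omega) (by omega) hq htake hdrop
  simp only [q, length_cons, length_nil] at this
  rcases (by omega : n = 2 ∨ n = c.length - 2) with h | h <;> rw [h] <;> simp

variable [Fintype V] [DecidableEq V] [DecidableRel G.Adj]

theorem IsCycle.insert_neighborFinset_inter_subset (hc : c.IsCycle) (hg : G.girth = c.length) :
    insert x (G.neighborFinset x) ∩ c.support.toFinset ⊆
      {x, c.getVert 1, c.getVert (c.length - 1)} := by
  intro u hu
  simp only [mem_inter, mem_insert, mem_neighborFinset, List.mem_toFinset,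
    mem_singleton] at hu ⊢
  obtain ⟨rfl | hxu, hu⟩ := hu
  · exact Or.inl rfl
  · exact Or.inr (hc.eq_getVert_of_adj hg hu hxu)

theorem IsCycle.insert_neighborFinset_inter_subset_of_notMem (hc : c.IsCycle)
    (hg : G.girth = c.length) {v : V} (hv : v ∉ c.support) (hxv : G.Adj x v) :
    insert v (G.neighborFinset v) ∩ c.support.toFinset ⊆
      {x, c.getVert 2, c.getVert (c.length - 2)} := by
  intro u hu
  simp only [mem_inter, mem_insert, mem_neighborFinset, List.mem_toFinset,
    mem_singleton] at hu ⊢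
  obtain ⟨rfl | hvu, hu⟩ := hu
  · exact absurd hu hv
  by_cases hux : u = x
  · exact Or.inl hux
  · exact Or.inr (hc.eq_getVert_of_adj_of_adj hg hv hxv hvu hu hux)

theorem IsCycle.limPack_three (hc : c.IsCycle) (hg : G.girth = c.length) :
    limPack G 3 c.support.toFinset := by
  have hrot : ∀ y (hy : y ∈ c.support), (c.rotate y hy).IsCycle ∧
      G.girth = (c.rotate y hy).length ∧
      (c.rotate y hy).support.toFinset = c.support.toFinset :=
    fun y hy => ⟨hc.rotate hy, by rw [length_rotate, hg], by ext; simp⟩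
  intro v
  by_cases hv : v ∈ c.support
  · obtain ⟨hc', hg', hsupp⟩ := hrot v hv
    rw [← hsupp]
    exact (card_le_card (hc'.insert_neighborFinset_inter_subset hg')).trans card_le_three
  by_cases hx : ∃ x ∈ c.support, G.Adj v x
  · obtain ⟨x, hx, hvx⟩ := hx
    obtain ⟨hc', hg', hsupp⟩ := hrot x hx
    rw [← hsupp]
    have hsub := hc'.insert_neighborFinset_inter_subset_of_notMem hg' (by simpa using hv) hvx.symm
    exact (card_le_card hsub).trans card_le_three
  · push Not at hx
    have hempty : insert v (G.neighborFinset v) ∩ c.support.toFinset = ∅ := by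
      ext u
      simp only [mem_inter, mem_insert, mem_neighborFinset, List.mem_toFinset,
        notMem_empty, iff_false, not_and]
      rintro (rfl | hvu) hu
      exacts [hv hu, hx u hu hvu]
    simp [hempty]

end Walk

end SimpleGraph

namespace limPack

variable {V : Type*} [Fintype V] [DecidableEq V] {G : SimpleGraph V} [DecidableRel G.Adj]
  {j : ℕ} {B : Finset V}

theorem add_one_insert (hB : limPack G j B) (u : V) : limPack G (j + 1) (insert u B) := by
  intro v
  calc (insert v (G.neighborFinset v) ∩ insert u B).card
      ≤ (insert u (insert v (G.neighborFinset v) ∩ B)).card := by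
        refine card_le_card fun z hz => ?_
        simp only [mem_inter, mem_insert] at hz ⊢
        tauto
    _ ≤ j + 1 := (card_insert_le _ _).trans (Nat.add_le_add_right (hB v) 1)

theorem exists_notMem [Nonempty V] (hB : limPack G j B) (hj : j ≤ G.maxDegree) :
    ∃ u, u ∉ B := by
  by_contra! h
  obtain ⟨v, hv⟩ := G.exists_maximal_degree_vertex
  have hcard := hB v
  rw [eq_univ_iff_forall.2 h, inter_univ, card_insert_of_notMem (G.notMem_neighborFinset_self v),
    G.card_neighborFinset_eq_degree] at hcard
  omega

theorem exists_card_add [Nonempty V] (hB : limPack G j B) (n : ℕ)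
    (hn : j + n ≤ G.maxDegree + 1) :
    ∃ B' : Finset V, limPack G (j + n) B' ∧ B'.card = B.card + n := by
  induction n with
  | zero => exact ⟨B, hB, rfl⟩
  | succ n ih =>
    obtain ⟨B', hB', hcard⟩ := ih (by omega)
    obtain ⟨u, hu⟩ := hB'.exists_notMem (by omega)
    exact ⟨_, hB'.add_one_insert u, by rw [card_insert_of_notMem hu, hcard, add_assoc]⟩

theorem card_le_limPackNum (hB : limPack G j B) : B.card ≤ limPackNum G j :=
  le_csSup ⟨Fintype.card V, fun _ ⟨B', _, hB'⟩ => hB' ▸ card_le_univ B'⟩ ⟨B, hB, rfl⟩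

end limPack

theorem stmt_9 {V : Type*} [Fintype V] [DecidableEq V] (G : SimpleGraph V)
    [DecidableRel G.Adj] (hG : ¬ G.IsAcyclic) (k : ℕ) (hk : 3 ≤ k)
    (hΔ : k ≤ G.maxDegree) :
    G.girth + k - 3 ≤ limPackNum G k := by
  obtain ⟨x, c, hc, hg⟩ := G.exists_girth_eq_length.2 hG
  have : Nonempty V := ⟨x⟩
  obtain ⟨B, hB, hcard⟩ := (hc.limPack_three hg).exists_card_add (k - 3) (by omega)
  rw [show 3 + (k - 3) = k by omega] at hB
  rw [hc.card_support_toFinset, ← hg] at hcard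
  have := hB.card_le_limPackNum
  omega
end

section
/- For any graph G with at least one edge, L_1(G) + 1 ≤ L_2(G) ≤ (2(Δ(G)² + 1)/(δ(G) + 1)) · L_1(G). -/
open Finset

/-!
Adding any vertex to a maximum 1-limited packing gives a 2-limited packing, and when `G` has an
edge some closed neighbourhood has two vertices, so no 1-limited packing is all of `V`.
For the upper bound, double counting pairs `(b, w)` with `b ∈ B` and `w ∈ N[b]` shows
`(δ + 1) L_2 ≤ 2 n`, while by maximality every vertex is within distance two of a maximum
1-limited packing, and a ball of radius two has at most `Δ² + 1` vertices, so `n ≤ (Δ² + 1) L_1`.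
-/

section

variable {V : Type*} [Fintype V] [DecidableEq V] (G : SimpleGraph V) [DecidableRel G.Adj]

local notation "N[" v "]" => insert v (SimpleGraph.neighborFinset G v)

lemma mem_closedNbhd_comm {v w : V} : w ∈ N[v] ↔ v ∈ N[w] := by
  simp only [mem_insert, SimpleGraph.mem_neighborFinset]
  rw [G.adj_comm, eq_comm]

lemma card_closedNbhd (v : V) : #N[v] = G.degree v + 1 := by
  rw [card_insert_of_notMem (by simp), G.card_neighborFinset_eq_degree]

variable {G}

lemma limPack.insert_succ {k : ℕ} {B : Finset V} (hB : limPack G k B) (x : V) :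
    limPack G (k + 1) (insert x B) := fun v =>
  calc #(N[v] ∩ insert x B) ≤ #(insert x (N[v] ∩ B)) := by
        by_cases hx : x ∈ N[v]
        · rw [inter_insert_of_mem hx]
        · rw [inter_insert_of_notMem hx]; exact card_le_card (subset_insert _ _)
    _ ≤ #(N[v] ∩ B) + 1 := card_insert_le _ _
    _ ≤ k + 1 := by grind [limPack]

lemma limPack.exists_le_card_inter_of_not_insert {k : ℕ} {B : Finset V} (hB : limPack G k B)
    {w : V} (hw : ¬ limPack G k (insert w B)) : ∃ z, w ∈ N[z] ∧ k ≤ #(N[z] ∩ B) := by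
  obtain ⟨z, hz⟩ : ∃ z, k < #(N[z] ∩ insert w B) := by simpa [limPack] using hw
  by_cases hwz : w ∈ N[z]
  · rw [inter_insert_of_mem hwz] at hz
    exact ⟨z, hwz, Nat.lt_succ_iff.mp (hz.trans_le (card_insert_le _ _))⟩
  · rw [inter_insert_of_notMem hwz] at hz
    exact absurd (hB z) hz.not_ge

variable (G)

lemma bddAbove_limPack_card (k : ℕ) : BddAbove {n | ∃ B : Finset V, limPack G k B ∧ #B = n} :=
  ⟨Fintype.card V, by rintro n ⟨B, -, rfl⟩; exact B.card_le_univ⟩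

variable {G}

lemma limPack.card_le_limPackNum_s19 {k : ℕ} {B : Finset V} (hB : limPack G k B) :
    #B ≤ limPackNum G k :=
  le_csSup (bddAbove_limPack_card G k) ⟨B, hB, rfl⟩

variable (G)

lemma exists_limPack_card_eq_limPackNum (k : ℕ) :
    ∃ B : Finset V, limPack G k B ∧ #B = limPackNum G k :=
  Nat.sSup_mem (s := {n | ∃ B : Finset V, limPack G k B ∧ #B = n}) ⟨0, ∅, fun _ => by simp, rfl⟩
    (bddAbove_limPack_card G k)

lemma limPackNum_add_one_le {k : ℕ} (hk : ∃ v, k ≤ G.degree v) :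
    limPackNum G k + 1 ≤ limPackNum G (k + 1) := by
  obtain ⟨B, hB, hcard⟩ := exists_limPack_card_eq_limPackNum G k
  obtain ⟨x, hx⟩ : ∃ x, x ∉ B := by
    by_contra! hall
    obtain ⟨v, hv⟩ := hk
    have := hB v
    rw [inter_eq_left.mpr fun x _ => hall x, card_closedNbhd] at this
    omega
  simpa [card_insert_of_notMem hx, hcard] using (hB.insert_succ x).card_le_limPackNum_s19

lemma limPack.mul_card_le {k : ℕ} {B : Finset V} (hB : limPack G k B) :
    (G.minDegree + 1) * #B ≤ k * Fintype.card V := by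
  have := card_nsmul_le_card_nsmul (s := B) (t := univ) (fun b w => w ∈ N[b])
    (m := G.minDegree + 1) (n := k)
    (fun b _ => by
      simp only [bipartiteAbove, filter_mem_eq_inter, univ_inter, card_closedNbhd]
      exact Nat.succ_le_succ (G.minDegree_le_degree b))
    (fun w _ => by
      simp only [bipartiteBelow, mem_closedNbhd_comm G (w := w)]
      rw [filter_mem_eq_inter, inter_comm]
      exact hB w)
  simpa [mul_comm] using this

lemma mul_limPackNum_le (k : ℕ) : (G.minDegree + 1) * limPackNum G k ≤ k * Fintype.card V := by
  obtain ⟨B, hB, hcard⟩ := exists_limPack_card_eq_limPackNum G k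
  exact hcard ▸ hB.mul_card_le

-- `b` is erased from the second neighbourhoods so that the bound `Δ² + 1` comes out exactly.
def ballTwo (b : V) : Finset V :=
  insert b ((G.neighborFinset b).biUnion fun u => insert u ((G.neighborFinset u).erase b))

lemma mem_ballTwo_of_mem_closedNbhd {b w z : V} (hw : w ∈ N[z]) (hb : b ∈ N[z]) :
    w ∈ ballTwo G b := by
  simp only [mem_insert, SimpleGraph.mem_neighborFinset] at hw hb
  simp only [ballTwo, mem_insert, mem_biUnion, SimpleGraph.mem_neighborFinset, mem_erase]
  by_cases hwb : w = b
  · exact Or.inl hwb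
  rcases hw with rfl | hzw <;> rcases hb with rfl | hzb
  · exact Or.inl rfl
  · exact Or.inr ⟨w, hzb.symm, Or.inl rfl⟩
  · exact Or.inr ⟨w, hzw, Or.inl rfl⟩
  · exact Or.inr ⟨z, hzb.symm, Or.inr ⟨hwb, hzw⟩⟩

lemma card_ballTwo_le (b : V) : #(ballTwo G b) ≤ G.maxDegree ^ 2 + 1 := by
  have hsecond : ∀ u ∈ G.neighborFinset b,
      #(insert u ((G.neighborFinset u).erase b)) ≤ G.maxDegree := fun u hu => by
    have hbu : b ∈ G.neighborFinset u := by simpa [G.adj_comm] using hu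
    calc #(insert u ((G.neighborFinset u).erase b))
        ≤ #((G.neighborFinset u).erase b) + 1 := card_insert_le _ _
      _ = G.degree u := by
        rw [card_erase_add_one hbu, G.card_neighborFinset_eq_degree]
      _ ≤ G.maxDegree := G.degree_le_maxDegree u
  calc #(ballTwo G b)
      ≤ #((G.neighborFinset b).biUnion fun u => insert u ((G.neighborFinset u).erase b)) + 1 :=
        card_insert_le _ _
    _ ≤ #(G.neighborFinset b) * G.maxDegree + 1 := by
        gcongr
        exact card_biUnion_le_card_mul _ _ _ hsecond
    _ ≤ G.maxDegree ^ 2 + 1 := by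
        rw [G.card_neighborFinset_eq_degree, sq]
        gcongr
        exact G.degree_le_maxDegree b

lemma univ_subset_biUnion_ballTwo {B : Finset V} (hB : limPack G 1 B)
    (hmax : #B = limPackNum G 1) : univ ⊆ B.biUnion (ballTwo G) := by
  intro w _
  rw [mem_biUnion]
  by_cases hwB : w ∈ B
  · exact ⟨w, hwB, mem_insert_self _ _⟩
  have hw : ¬ limPack G 1 (insert w B) := fun h => by
    have := h.card_le_limPackNum_s19
    rw [card_insert_of_notMem hwB] at this
    omega
  obtain ⟨z, hwz, hz⟩ := hB.exists_le_card_inter_of_not_insert hw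
  obtain ⟨b, hb⟩ := card_pos.mp hz
  exact ⟨b, (mem_inter.mp hb).2, mem_ballTwo_of_mem_closedNbhd G hwz (mem_inter.mp hb).1⟩

lemma card_le_mul_limPackNum_one : Fintype.card V ≤ (G.maxDegree ^ 2 + 1) * limPackNum G 1 := by
  obtain ⟨B, hB, hcard⟩ := exists_limPack_card_eq_limPackNum G 1
  calc Fintype.card V = #(univ : Finset V) := rfl
    _ ≤ #(B.biUnion (ballTwo G)) := card_le_card (univ_subset_biUnion_ballTwo G hB hcard)
    _ ≤ #B * (G.maxDegree ^ 2 + 1) := card_biUnion_le_card_mul _ _ _ fun b _ => card_ballTwo_le G b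
    _ = (G.maxDegree ^ 2 + 1) * limPackNum G 1 := by rw [hcard, mul_comm]

end

theorem stmt_19 {V : Type*} [Fintype V] [DecidableEq V] (G : SimpleGraph V)
    [DecidableRel G.Adj] (he : ∃ u v : V, G.Adj u v) :
    limPackNum G 1 + 1 ≤ limPackNum G 2 ∧
    (G.minDegree + 1) * limPackNum G 2 ≤
      2 * (G.maxDegree ^ 2 + 1) * limPackNum G 1 := by
  obtain ⟨u, v, huv⟩ := he
  refine ⟨limPackNum_add_one_le G ⟨u, (G.degree_pos_iff_exists_adj u).mpr ⟨v, huv⟩⟩, ?_⟩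
  calc (G.minDegree + 1) * limPackNum G 2 ≤ 2 * Fintype.card V := mul_limPackNum_le G 2
    _ ≤ 2 * ((G.maxDegree ^ 2 + 1) * limPackNum G 1) := by
        gcongr; exact card_le_mul_limPackNum_one G
    _ = 2 * (G.maxDegree ^ 2 + 1) * limPackNum G 1 := (mul_assoc ..).symm
end
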